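/- Let $n \geq 2$, $1 \leq \kappa \leq n$, $\varepsilon > 0$. Suppose $\eta$ and $\omega$ are elements of an ordered commutative ring $R$ (with a notion of nonnegative elements closed under products and sums) such that $\eta \geq 0$, $\omega > 0$, all products $\eta^i \omega^{n-1-i} \geq 0$ for $1 \leq i \leq \kappa$, $\omega^{n-1} > 0$, and $\eta^l = 0$ for $l > \kappa$. If $a \in \mathbb{R}$ satisfies $a\binom{n-1}{i} - (n-1)\binom{n-2}{i-1} > 0$ for all $1 \leq i \leq \kappa$ and $a > 0$, then for every $\delta > 0$, $a(\eta + \delta\omega)^{n-1} - (n-1)\eta(\eta+\delta\omega)^{n-2} > 0$ in $R$ (i.e., it is a sum of a strictly positive term $a(\delta\omega)^{n-1}$ and nonnegative terms). -/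
import Mathlib


theorem positivity_of_expansion {R : Type*} [CommRing R] [PartialOrder R] [Algebra ℝ R]
    (hadd : ∀ x y : R, 0 < x → 0 ≤ y → 0 < x + y)
    (hmul : ∀ x y : R, 0 ≤ x → 0 ≤ y → 0 ≤ x * y)
    (hsmul_nonneg : ∀ (c : ℝ) (x : R), 0 ≤ c → 0 ≤ x → 0 ≤ c • x)
    (hsmul_pos : ∀ (c : ℝ) (x : R), 0 < c → 0 < x → 0 < c • x)
    (n κ : ℕ) (hn : 2 ≤ n) (hκ1 : 1 ≤ κ) (hκn : κ ≤ n)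
    (η ω : R) (hη : 0 ≤ η) (hω : 0 < ω)
    (hmix : ∀ i : ℕ, 1 ≤ i → i ≤ κ → 0 ≤ η ^ i * ω ^ (n - 1 - i))
    (hωpow : 0 < ω ^ (n - 1))
    (hnil : ∀ l : ℕ, κ < l → η ^ l = 0)
    (a : ℝ) (ha : 0 < a)
    (hai : ∀ i : ℕ, 1 ≤ i → i ≤ κ →
      0 < a * ((n - 1).choose i : ℝ) - ((n : ℝ) - 1) * ((n - 2).choose (i - 1) : ℝ)) :
    ∀ δ : ℝ, 0 < δ →
      0 < a • (η + δ • ω) ^ (n - 1) - ((n : ℝ) - 1) • (η * (η + δ • ω) ^ (n - 2)) := by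
  -- helper: x * (c : R) = (c : ℝ) • x for natural c
  have cast_mul : ∀ (c : ℕ) (x : R), x * (c : R) = (c : ℝ) • x := by
    intro c x
    rw [mul_comm, ← nsmul_eq_mul, ← Nat.cast_smul_eq_nsmul ℝ]
  -- helper: strictly positive plus a finite sum of nonnegatives is strictly positive
  have key : ∀ (s : Finset ℕ) (f : ℕ → R) (x : R), 0 < x →
      (∀ i ∈ s, 0 ≤ f i) → 0 < x + ∑ i ∈ s, f i := by
    intro s f x hx hf
    induction s using Finset.induction with
    | empty => simpa using hx
    | @insert b s hb ih =>
      rw [Finset.sum_insert hb]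
      have h1 := ih (fun i hi => hf i (Finset.mem_insert_of_mem hi))
      have h2 := hadd _ _ h1 (hf b (Finset.mem_insert_self b s))
      have : x + (f b + ∑ i ∈ s, f i) = x + ∑ i ∈ s, f i + f b := by ring
      rw [this]
      exact h2
  intro δ hδ
  obtain ⟨m, rfl⟩ : ∃ m, n = m + 1 := ⟨n - 1, by omega⟩
  have hm : 1 ≤ m := by omega
  have hn1 : m + 1 - 1 = m := by omega
  have hn2 : m + 1 - 2 = m - 1 := by omega
  have hcast : ((m + 1 : ℕ) : ℝ) - 1 = (m : ℝ) := by push_cast; ring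
  rw [hn1, hn2, hcast]
  rw [hn1] at hωpow
  -- the expansion
  have hm1 : m - 1 + 1 = m := by omega
  have expand : a • (η + δ • ω) ^ m - (m : ℝ) • (η * (η + δ • ω) ^ (m - 1))
      = (a * δ ^ m) • ω ^ m +
        ∑ j ∈ Finset.range m,
          (((a * ((m.choose (j + 1)) : ℝ) - (m : ℝ) * (((m - 1).choose j) : ℝ))
              * δ ^ (m - 1 - j)) • (η ^ (j + 1) * ω ^ (m - 1 - j))) := by
    rw [add_pow, add_pow, hm1, Finset.mul_sum, Finset.smul_sum, Finset.smul_sum,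
      Finset.sum_range_succ']
    have hsplit : ∀ (u v w z : R), (u + v) - w = z + (u - w) → True := fun _ _ _ _ _ => trivial
    rw [add_sub_right_comm, ← Finset.sum_sub_distrib, add_comm]
    congr 1
    · simp only [pow_zero, one_mul, Nat.sub_zero, Nat.choose_zero_right, Nat.cast_one, mul_one]
      rw [smul_pow, smul_smul]
    · apply Finset.sum_congr rfl
      intro j hj
      have hk : m - (j + 1) = m - 1 - j := by omega
      rw [hk, smul_pow, mul_smul_comm, mul_smul_comm, smul_mul_assoc, smul_mul_assoc,
        cast_mul, cast_mul, mul_smul_comm, mul_smul_comm, ← mul_assoc, ← pow_succ' η j,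
        smul_smul, smul_smul, smul_smul, smul_smul, ← sub_smul]
      congr 1
      ring
  rw [expand]
  apply key
  · exact hsmul_pos _ _ (by positivity) hωpow
  · intro j hj
    by_cases h : j + 1 ≤ κ
    · apply hsmul_nonneg
      · have h1 := hai (j + 1) (by omega) h
        rw [hn1, hn2, hcast] at h1
        simp only [Nat.add_sub_cancel] at h1
        have := mul_pos h1 (pow_pos hδ (m - 1 - j))
        linarith
      · have h2 := hmix (j + 1) (by omega) h
        have : m + 1 - 1 - (j + 1) = m - 1 - j := by omega
        rwa [this] at h2
    · have : η ^ (j + 1) = 0 := hnil (j + 1) (by omega)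
      rw [this, zero_mul, smul_zero]
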